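/- arXiv:2006.13083 — 3 statements merged into one kernel-verified Lean document; each statement's English description precedes it below -/
import Mathlib

section
/- Let K be a field and P a standard-graded polynomial ring over K in finitely many variables. Let F be a finitely generated graded free P-module whose basis elements have non-negative degrees, T a graded submodule of F, and ℓ ∈ P a linear form such that T : ℓ^r = T : ℓ^{r+1} for some integer r ≥ 0. Then the Hilbert series satisfy H_{F/T}(t) = Σ_{e=0}^{r−1} H_{F/((T:ℓ^e) + ℓF)}(t)·t^e + H_{F/((T:ℓ^r) + ℓF)}(t)·t^r/(1−t), an identity in ℤ[[t]] (where 1/(1−t) = Σ_{k≥0} t^k). -/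
/-!  Lemma 4.5: repeated division by a linear form and Hilbert series.
`P = K[x_1,…,x_ν]` is a standard-graded polynomial ring over a field `K`, and
`F = ⊕_{α ∈ ι} P e_α` a finitely generated graded free `P`-module whose basis elements
`e_α` have non-negative degrees `deg α`. -/

noncomputable section

open scoped Classical

variable (K : Type) [Field K] (ν : ℕ) (ι : Type) [Fintype ι] (deg : ι → ℕ)

/-- A finitely generated graded free module `F = ⊕_{α ∈ ι} P e_α` over
`P = K[x_1,…,x_ν]`. -/
abbrev FreeP (K : Type) [Field K] (ν : ℕ) (ι : Type) : Type :=
  ι →₀ MvPolynomial (Fin ν) K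

/-- The degree-`j` homogeneous component of `F` as a `K`-subspace: the span of the
monomials `x^u e_α` with `|u| + deg α = j`. -/
def homogCompF (j : ℕ) : Submodule K (FreeP K ν ι) :=
  Submodule.span K
    {x | ∃ (u : Fin ν →₀ ℕ) (α : ι), (u.sum fun _ e => e) + deg α = j ∧
      x = Finsupp.single α (MvPolynomial.monomial u (1 : K))}

/-- A graded (i.e. homogeneous) submodule of `F`: one generated by homogeneous
elements. -/
def IsGradedSub (T : Submodule (MvPolynomial (Fin ν) K) (FreeP K ν ι)) : Prop :=
  ∃ S : Set (FreeP K ν ι), (∀ x ∈ S, ∃ j, x ∈ homogCompF K ν ι deg j) ∧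
    T = Submodule.span (MvPolynomial (Fin ν) K) S

/-- The colon submodule `T : f = {q ∈ F : f·q ∈ T}`. -/
def colonBy (T : Submodule (MvPolynomial (Fin ν) K) (FreeP K ν ι))
    (f : MvPolynomial (Fin ν) K) : Submodule (MvPolynomial (Fin ν) K) (FreeP K ν ι) :=
  Submodule.comap (LinearMap.lsmul (MvPolynomial (Fin ν) K) (FreeP K ν ι) f) T

/-- The Hilbert series `H_{F/T}(t) = Σ_j dim_K [F/T]_j t^j ∈ ℤ[[t]]`, where the
degree-`j` component of the graded quotient is the image of `[F]_j` in `F/T`. -/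
def hilbQ (T : Submodule (MvPolynomial (Fin ν) K) (FreeP K ν ι)) : PowerSeries ℤ :=
  PowerSeries.mk fun j =>
    (Module.finrank K
      (Submodule.map (Submodule.restrictScalars K T).mkQ (homogCompF K ν ι deg j)) : ℤ)


/-! Multiplication by a form `f` of degree `d` gives, in every degree `j`, an exact sequence of
`K`-spaces `0 → [F/(T : f)]_j → [F/T]_{j+d} → [F/(T + fF)]_{j+d} → 0`; exactness in the middle is
`(T + fF) ∩ [F]_{j+d} = [T]_{j+d} + f·[F]_j`, which holds because `T` is graded. Hence
`H_{F/T} = H_{F/(T+fF)} + t^d H_{F/(T:f)}`. Since `T : f^e` is again graded and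
`(T : f^e) : f = T : f^{e+1}`, iterating this `r` times gives the finite sum, and the hypothesis
`T : ℓ^r = T : ℓ^{r+1}` turns the last step into `H = H' + t H`, i.e. `H = H'/(1 - t)`. -/

open MvPolynomial Module

attribute [local instance] MvPolynomial.gradedAlgebra in
lemma MvPolynomial.IsHomogeneous.homogeneousComponent_mul {σ R : Type*} [CommSemiring R]
    {f : MvPolynomial σ R} {d : ℕ} (hf : f.IsHomogeneous d) (p : MvPolynomial σ R) (n : ℕ) :
    homogeneousComponent n (f * p) = if d ≤ n then f * homogeneousComponent (n - d) p else 0 := by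
  have decompose_eq (q : MvPolynomial σ R) (m : ℕ) :
      (DirectSum.decompose (homogeneousSubmodule σ R) q m : MvPolynomial σ R) =
        homogeneousComponent m q :=
    decomposition.decompose'_apply q m
  simpa only [decompose_eq] using
    DirectSum.coe_decompose_mul_of_left_mem (homogeneousSubmodule σ R) (b := p) n hf

lemma Submodule.mem_ideal_span_singleton_smul_top {R M : Type*} [CommSemiring R]
    [AddCommMonoid M] [Module R M] {r : R} {x : M} :
    x ∈ Ideal.span {r} • (⊤ : Submodule R M) ↔ ∃ y, r • y = x := by
  simp [Submodule.ideal_span_singleton_smul, Submodule.mem_smul_pointwise_iff_exists]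

section FinrankMap

variable {k V W : Type*} [DivisionRing k] [AddCommGroup V] [Module k V] [AddCommGroup W]
  [Module k W]

lemma Submodule.finrank_map_add_finrank_ker_inf (g : V →ₗ[k] W) (U : Submodule k V)
    [FiniteDimensional k U] :
    finrank k (U.map g) + finrank k (LinearMap.ker g ⊓ U : Submodule k V) = finrank k U := by
  have h_ker : LinearMap.ker (g.domRestrict U) = (LinearMap.ker g ⊓ U).comap U.subtype := by
    rw [LinearMap.ker_domRestrict, Submodule.comap_inf, Submodule.comap_subtype_self, inf_top_eq]
  rw [← LinearMap.range_domRestrict, ← (Submodule.comapSubtypeEquivOfLe inf_le_right).finrank_eq,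
    ← h_ker, LinearMap.finrank_range_add_finrank_ker]

lemma Submodule.finrank_map_add_finrank_of_ker_inf_le (g : V →ₗ[k] W) {U U' : Submodule k V}
    [FiniteDimensional k U] (hU' : U' ≤ U) (hker : LinearMap.ker g ⊓ U ≤ U') :
    finrank k (U.map g) + finrank k U' = finrank k (U'.map g) + finrank k U := by
  have : FiniteDimensional k U' := Submodule.finiteDimensional_of_le hU'
  have h_ker : LinearMap.ker g ⊓ U' = LinearMap.ker g ⊓ U :=
    le_antisymm (inf_le_inf_left _ hU') (le_inf inf_le_left hker)
  have hU := U.finrank_map_add_finrank_ker_inf g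
  have hU'' := U'.finrank_map_add_finrank_ker_inf g
  rw [h_ker] at hU''
  omega

end FinrankMap

lemma PowerSeries.eq_mul_mk_one_of_eq_add_X_mul {R : Type*} [CommRing R] {H B : PowerSeries R}
    (h : H = B + X * H) : H = B * mk fun _ => 1 :=
  calc H = H * ((1 - X) * mk 1) := by rw [mul_comm (1 - X), mk_one_mul_one_sub_eq_one, mul_one]
    _ = (H - X * H) * mk 1 := by ring
    _ = B * mk fun _ => 1 := by rw [← eq_sub_of_add_eq h.symm]; rfl

section GradedFreeModule

variable {K : Type} [Field K] {ν : ℕ} {ι : Type}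

local notation "𝓟" => MvPolynomial (Fin ν) K
local notation "𝓕" => FreeP K ν ι

def degProj (deg : ι → ℕ) (j : ℕ) : 𝓕 →ₗ[K] 𝓕 where
  toFun x := Finsupp.onFinset x.support
    (fun α => if deg α ≤ j then homogeneousComponent (j - deg α) (x α) else 0)
    (fun α h => Finsupp.mem_support_iff.mpr fun h0 => h (by simp [h0]))
  map_add' x y := by
    ext α
    simp only [Finsupp.onFinset_apply, Finsupp.add_apply]
    split_ifs <;> simp
  map_smul' c x := by
    ext α
    simp only [Finsupp.onFinset_apply, Finsupp.smul_apply, RingHom.id_apply]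
    split_ifs <;> simp

def IsHomogeneousSubmodule (deg : ι → ℕ) (T : Submodule 𝓟 𝓕) : Prop :=
  ∀ j ⦃x⦄, x ∈ T → degProj deg j x ∈ T

variable {deg : ι → ℕ} {T : Submodule (MvPolynomial (Fin ν) K) (FreeP K ν ι)}
  {f : MvPolynomial (Fin ν) K} {d : ℕ}

local notation "𝓕[" j "]" => homogCompF K ν ι deg j

lemma degProj_apply (j : ℕ) (x : 𝓕) (α : ι) :
    degProj deg j x α = if deg α ≤ j then homogeneousComponent (j - deg α) (x α) else 0 :=
  rfl

lemma degProj_degProj (j k : ℕ) (x : 𝓕) :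
    degProj deg j (degProj deg k x) = if j = k then degProj deg k x else 0 := by
  ext α : 1
  by_cases hjk : j = k
  · subst hjk
    simp only [degProj_apply, if_true]
    split_ifs <;> simp [homogeneousComponent_of_mem (homogeneousComponent_mem _ _)]
  · simp only [degProj_apply, if_neg hjk, Finsupp.coe_zero, Pi.zero_apply]
    split_ifs <;> simp [homogeneousComponent_of_mem (homogeneousComponent_mem _ _)]; omega

lemma degProj_smul (hf : f.IsHomogeneous d) (j : ℕ) (y : 𝓕) :
    degProj deg j (f • y) = if d ≤ j then f • degProj deg (j - d) y else 0 := by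
  ext α : 1
  by_cases hdj : d ≤ j
  · simp only [if_pos hdj, degProj_apply, Finsupp.smul_apply, smul_eq_mul,
      hf.homogeneousComponent_mul]
    split_ifs <;> first | omega | rw [Nat.sub_right_comm] | simp
  · simp only [if_neg hdj, degProj_apply, Finsupp.smul_apply, smul_eq_mul,
      hf.homogeneousComponent_mul, Finsupp.coe_zero, Pi.zero_apply]
    split_ifs <;> first | rfl | omega

lemma single_mem_homogCompF {p : 𝓟} {n j : ℕ} {α : ι} (hp : p.IsHomogeneous n)
    (hj : n + deg α = j) : Finsupp.single α p ∈ 𝓕[j] := by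
  rw [← support_sum_monomial_coeff p, Finsupp.single_finsetSum]
  refine Submodule.sum_mem _ fun u hu => ?_
  have hu : u.degree = n := by
    rw [Finsupp.degree_eq_weight_one]; exact hp (mem_support_iff.mp hu)
  rw [← mul_one (coeff u p), ← smul_eq_mul, ← smul_monomial, ← Finsupp.smul_single]
  exact Submodule.smul_mem _ _ (Submodule.subset_span ⟨u, α, by rw [← hj, ← hu]; rfl, rfl⟩)

lemma degProj_mem_homogCompF (j : ℕ) (x : 𝓕) : degProj deg j x ∈ 𝓕[j] := by
  rw [← Finsupp.sum_single (degProj deg j x)]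
  refine Submodule.finsuppSum_mem _ _ _ _ fun α _ => ?_
  rw [degProj_apply]
  split_ifs with hα
  · exact single_mem_homogCompF (homogeneousComponent_isHomogeneous _ _) (by omega)
  · rw [Finsupp.single_zero]; exact Submodule.zero_mem _

lemma mem_homogCompF_iff {j : ℕ} {x : 𝓕} : x ∈ 𝓕[j] ↔ degProj deg j x = x := by
  refine ⟨fun hx => ?_, fun hx => hx ▸ degProj_mem_homogCompF j x⟩
  suffices 𝓕[j] ≤ LinearMap.eqLocus (degProj deg j) LinearMap.id from this hx
  refine Submodule.span_le.mpr ?_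
  rintro _ ⟨u, α, hu, rfl⟩
  ext β : 1
  rw [LinearMap.id_apply, degProj_apply]
  rcases eq_or_ne β α with rfl | hβ
  · rw [Finsupp.single_eq_same, if_pos (by omega),
      homogeneousComponent_eq_self
        (isHomogeneous_monomial _ (by rw [← hu, Nat.add_sub_cancel]; rfl))]
  · simp [Finsupp.single_eq_of_ne' hβ.symm]

lemma degProj_of_mem {j k : ℕ} {x : 𝓕} (hx : x ∈ 𝓕[k]) :
    degProj deg j x = if j = k then x else 0 := by
  rw [mem_homogCompF_iff] at hx
  rw [← hx, degProj_degProj, hx]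

lemma smul_mem_homogCompF (hf : f.IsHomogeneous d) {k : ℕ} {x : 𝓕} (hx : x ∈ 𝓕[k]) :
    f • x ∈ 𝓕[k + d] := by
  rw [mem_homogCompF_iff] at hx ⊢
  rw [degProj_smul hf, if_pos (by omega), Nat.add_sub_cancel, hx]

instance [Fintype ι] (j : ℕ) : FiniteDimensional K 𝓕[j] := by
  refine FiniteDimensional.span_of_finite K ?_
  have hfin : {p : (Fin ν →₀ ℕ) × ι | p.1.degree ≤ j}.Finite :=
    ((Finsupp.finite_of_degree_le j).prod Set.finite_univ).subset fun p hp => ⟨hp, trivial⟩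
  refine (hfin.image fun p => Finsupp.single p.2 (monomial p.1 (1 : K))).subset ?_
  rintro _ ⟨u, α, hu, rfl⟩
  exact ⟨(u, α), show u.degree ≤ j by rw [← hu]; exact Nat.le_add_right _ _, rfl⟩

lemma IsGradedSub.isHomogeneousSubmodule (hT : IsGradedSub K ν ι deg T) :
    IsHomogeneousSubmodule deg T := by
  obtain ⟨S, hS, rfl⟩ := hT
  intro j x hx
  induction hx using Submodule.span_induction generalizing j with
  | mem x hx =>
    obtain ⟨k, hk⟩ := hS x hx
    rw [degProj_of_mem hk]
    split_ifs
    · exact Submodule.subset_span hx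
    · exact Submodule.zero_mem _
  | zero => rw [map_zero]; exact Submodule.zero_mem _
  | add x y _ _ hx hy => rw [map_add]; exact Submodule.add_mem _ (hx j) (hy j)
  | smul a x _ hx =>
    rw [← sum_homogeneousComponent a, Finset.sum_smul, map_sum]
    refine Submodule.sum_mem _ fun i _ => ?_
    rw [degProj_smul (homogeneousComponent_isHomogeneous i a)]
    split_ifs
    · exact Submodule.smul_mem _ _ (hx _)
    · exact Submodule.zero_mem _

lemma IsHomogeneousSubmodule.colonBy (hT : IsHomogeneousSubmodule deg T)
    (hf : f.IsHomogeneous d) : IsHomogeneousSubmodule deg (colonBy K ν ι T f) := by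
  intro j x hx
  have h := hT (j + d) hx
  rwa [LinearMap.lsmul_apply, degProj_smul hf, if_pos (by omega), Nat.add_sub_cancel] at h

lemma colonBy_one : colonBy K ν ι T 1 = T := by
  ext x
  simp [colonBy]

lemma colonBy_colonBy (g : 𝓟) : colonBy K ν ι (colonBy K ν ι T f) g = colonBy K ν ι T (f * g) := by
  ext x
  simp only [colonBy, Submodule.mem_comap, LinearMap.lsmul_apply, mul_smul]

lemma map_smul_homogCompF_le (hf : f.IsHomogeneous d) (j : ℕ) :
    𝓕[j].map (DistribSMul.toLinearMap K 𝓕 f) ≤ 𝓕[j + d] := by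
  rintro _ ⟨y, hy, rfl⟩
  exact smul_mem_homogCompF hf hy

lemma restrictScalars_sup_smul_top_inf_homogCompF (hT : IsHomogeneousSubmodule deg T)
    (hf : f.IsHomogeneous d) (j : ℕ) :
    (T ⊔ Ideal.span {f} • ⊤).restrictScalars K ⊓ 𝓕[j + d]
      = T.restrictScalars K ⊓ 𝓕[j + d] ⊔ 𝓕[j].map (DistribSMul.toLinearMap K 𝓕 f) := by
  refine le_antisymm ?_ (sup_le (inf_le_inf_right _ fun x hx => Submodule.mem_sup_left hx)
    (le_inf ?_ (map_smul_homogCompF_le hf j)))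
  · rintro x ⟨hxU, hx⟩
    obtain ⟨t, ht, _, hy, rfl⟩ :=
      Submodule.mem_sup.mp (Submodule.restrictScalars_mem K _ _ |>.mp hxU)
    obtain ⟨y, rfl⟩ := Submodule.mem_ideal_span_singleton_smul_top.mp hy
    have h_split : t + f • y = degProj deg (j + d) t + f • degProj deg j y := by
      conv_lhs => rw [← mem_homogCompF_iff.mp hx]
      rw [map_add, degProj_smul hf, if_pos (by omega), Nat.add_sub_cancel]
    rw [h_split]
    exact Submodule.add_mem_sup ⟨hT _ ht, degProj_mem_homogCompF _ _⟩
      ⟨_, degProj_mem_homogCompF j y, rfl⟩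
  · rintro _ ⟨y, -, rfl⟩
    exact Submodule.mem_sup_right (Submodule.mem_ideal_span_singleton_smul_top.mpr ⟨y, rfl⟩)

lemma restrictScalars_sup_smul_top_inf_homogCompF_of_lt (hT : IsHomogeneousSubmodule deg T)
    (hf : f.IsHomogeneous d) {n : ℕ} (hn : n < d) :
    (T ⊔ Ideal.span {f} • ⊤).restrictScalars K ⊓ 𝓕[n] = T.restrictScalars K ⊓ 𝓕[n] := by
  refine le_antisymm ?_ (inf_le_inf_right _ fun x hx => Submodule.mem_sup_left hx)
  rintro x ⟨hxU, hx⟩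
  obtain ⟨t, ht, _, hy, rfl⟩ :=
    Submodule.mem_sup.mp (Submodule.restrictScalars_mem K _ _ |>.mp hxU)
  obtain ⟨y, rfl⟩ := Submodule.mem_ideal_span_singleton_smul_top.mp hy
  have h_proj : t + f • y = degProj deg n t := by
    conv_lhs => rw [← mem_homogCompF_iff.mp hx]
    rw [map_add, degProj_smul hf, if_neg (by omega), add_zero]
  exact ⟨h_proj ▸ hT n ht, hx⟩

lemma restrictScalars_inf_homogCompF_inf_map_smul (hf : f.IsHomogeneous d) (j : ℕ) :
    T.restrictScalars K ⊓ 𝓕[j + d] ⊓ 𝓕[j].map (DistribSMul.toLinearMap K 𝓕 f)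
      = ((colonBy K ν ι T f).restrictScalars K ⊓ 𝓕[j]).map (DistribSMul.toLinearMap K 𝓕 f) := by
  rw [inf_assoc, inf_eq_right.mpr (map_smul_homogCompF_le hf j), inf_comm,
    Submodule.map_inf_eq_map_inf_comap, inf_comm]
  rfl

variable [Fintype ι]

lemma finrank_restrictScalars_sup_smul_top_inf_homogCompF (hT : IsHomogeneousSubmodule deg T)
    (hf : f.IsHomogeneous d) (j : ℕ) :
    (finrank K ↥((T ⊔ Ideal.span {f} • ⊤).restrictScalars K ⊓ 𝓕[j + d]) : ℤ)
      = finrank K ↥(T.restrictScalars K ⊓ 𝓕[j + d]) + finrank K 𝓕[j]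
        - finrank K ↥((colonBy K ν ι T f).restrictScalars K ⊓ 𝓕[j]) := by
  have h_sup := Submodule.finrank_sup_add_finrank_inf_eq
    (T.restrictScalars K ⊓ 𝓕[j + d]) (𝓕[j].map (DistribSMul.toLinearMap K 𝓕 f))
  have h_map := Submodule.finrank_map_add_finrank_of_ker_inf_le (DistribSMul.toLinearMap K 𝓕 f)
    (inf_le_right : (colonBy K ν ι T f).restrictScalars K ⊓ 𝓕[j] ≤ 𝓕[j])
    fun x ⟨hx, hxj⟩ => ⟨show f • x ∈ T by rw [show f • x = 0 from hx]; exact T.zero_mem, hxj⟩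
  rw [restrictScalars_inf_homogCompF_inf_map_smul hf] at h_sup
  rw [restrictScalars_sup_smul_top_inf_homogCompF hT hf]
  omega

lemma coeff_hilbQ (T : Submodule 𝓟 𝓕) (j : ℕ) :
    PowerSeries.coeff j (hilbQ K ν ι deg T)
      = (finrank K 𝓕[j] : ℤ) - finrank K ↥(T.restrictScalars K ⊓ 𝓕[j]) := by
  have h := 𝓕[j].finrank_map_add_finrank_ker_inf (T.restrictScalars K).mkQ
  rw [Submodule.ker_mkQ] at h
  rw [hilbQ, PowerSeries.coeff_mk]
  omega

theorem hilbQ_eq_add_X_pow_mul (hT : IsHomogeneousSubmodule deg T) (hf : f.IsHomogeneous d) :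
    hilbQ K ν ι deg T
      = hilbQ K ν ι deg (T ⊔ Ideal.span {f} • ⊤)
        + PowerSeries.X ^ d * hilbQ K ν ι deg (colonBy K ν ι T f) := by
  ext n
  rw [map_add, PowerSeries.coeff_X_pow_mul', coeff_hilbQ, coeff_hilbQ]
  split_ifs with hdn
  · obtain ⟨j, rfl⟩ := Nat.exists_eq_add_of_le' hdn
    rw [Nat.add_sub_cancel, coeff_hilbQ, finrank_restrictScalars_sup_smul_top_inf_homogCompF hT hf]
    ring
  · rw [restrictScalars_sup_smul_top_inf_homogCompF_of_lt hT hf (not_le.mp hdn)]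
    ring

theorem hilbQ_eq_sum_add_X_pow_mul (hT : IsHomogeneousSubmodule deg T) (hf : f.IsHomogeneous d)
    (n : ℕ) :
    hilbQ K ν ι deg T
      = ∑ e ∈ Finset.range n,
          hilbQ K ν ι deg (colonBy K ν ι T (f ^ e) ⊔ Ideal.span {f} • ⊤) * (PowerSeries.X ^ d) ^ e
        + (PowerSeries.X ^ d) ^ n * hilbQ K ν ι deg (colonBy K ν ι T (f ^ n)) := by
  induction n with
  | zero => simp [colonBy_one]
  | succ n ih =>
    rw [ih, hilbQ_eq_add_X_pow_mul (hT.colonBy (hf.pow n)) hf, colonBy_colonBy, ← pow_succ,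
      Finset.sum_range_succ]
    ring

end GradedFreeModule

/-- **Repeated division by a linear form** (Lemma 4.5).
Let `T` be a graded submodule of the finitely generated graded free module `F` (with
basis of non-negative degrees) over `P = K[x_1,…,x_ν]`, and let `ℓ ∈ P` be a linear form
with `T : ℓ^r = T : ℓ^{r+1}` for some `r ≥ 0`.  Then
`H_{F/T}(t) = Σ_{e=0}^{r-1} H_{F/(T:ℓ^e + ℓF)}(t)·t^e + H_{F/(T:ℓ^r + ℓF)}(t)·t^r/(1-t)`
in `ℤ[[t]]`, where `1/(1-t) = Σ_{k≥0} t^k`. -/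
theorem hilbert_series_repeated_division
    (T : Submodule (MvPolynomial (Fin ν) K) (FreeP K ν ι))
    (hT : IsGradedSub K ν ι deg T)
    (ℓ : MvPolynomial (Fin ν) K) (hℓ : ℓ.IsHomogeneous 1)
    (r : ℕ) (hr : colonBy K ν ι T (ℓ ^ r) = colonBy K ν ι T (ℓ ^ (r + 1))) :
    hilbQ K ν ι deg T
      = (∑ e ∈ Finset.range r,
          hilbQ K ν ι deg
              (colonBy K ν ι T (ℓ ^ e) ⊔
                (Ideal.span {ℓ} • (⊤ : Submodule (MvPolynomial (Fin ν) K) (FreeP K ν ι))))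
            * PowerSeries.X ^ e)
        + hilbQ K ν ι deg
            (colonBy K ν ι T (ℓ ^ r) ⊔
              (Ideal.span {ℓ} • (⊤ : Submodule (MvPolynomial (Fin ν) K) (FreeP K ν ι))))
          * PowerSeries.X ^ r * PowerSeries.mk (fun _ => (1 : ℤ)) := by
  have hT' := hT.isHomogeneousSubmodule
  have h_stable := hilbQ_eq_add_X_pow_mul (hT'.colonBy (hℓ.pow r)) hℓ
  rw [colonBy_colonBy, ← pow_succ, ← hr, pow_one] at h_stable
  rw [hilbQ_eq_sum_add_X_pow_mul hT' hℓ r, PowerSeries.eq_mul_mk_one_of_eq_add_X_mul h_stable]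
  simp only [pow_one]
  ring

end
end

section
/- Let f(t) ∈ ℤ[t] be a polynomial with f(0) ∈ {0, 1}, and for each n ∈ ℕ define integers g_j(n) by f(t)^n = Σ_{j=0}^{n·deg f} g_j(n) t^j (so g_j(n) = 0 for j < 0 or j > n·deg f). Then for any fixed integer j ≥ 0 there exists a polynomial q ∈ ℚ[t] such that g_j(n) = q(n) for all sufficiently large n; that is, the coefficient of t^j in f(t)^n is eventually a polynomial function of n with rational coefficients. -/
open Polynomial Finset

/-- **Eventually polynomial coefficients of powers.**
Let `f ∈ ℤ[t]` with `f(0) ∈ {0,1}` and let `g_j(n)` be the coefficient of `t^j` in `f^n`.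
Then for any fixed `j`, the function `n ↦ g_j(n)` is eventually given by a polynomial
with rational coefficients. -/
theorem coeff_pow_eventually_polynomial
    (f : Polynomial ℤ) (hf : f.coeff 0 = 0 ∨ f.coeff 0 = 1) (j : ℕ) :
    ∃ q : Polynomial ℚ, ∃ N : ℕ, ∀ n : ℕ, N ≤ n →
      (((f ^ n).coeff j : ℤ) : ℚ) = q.eval (n : ℚ) := by
  rcases hf with hf | hf
  · -- X ∣ f, so coeff j (f^n) = 0 for n > j
    refine ⟨0, j + 1, fun n hn => ?_⟩
    have hX : X ∣ f := X_dvd_iff.mpr hf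
    have : X ^ n ∣ f ^ n := pow_dvd_pow_of_dvd hX n
    have h0 : (f ^ n).coeff j = 0 := (X_pow_dvd_iff.mp this) j (by omega)
    simp [h0]
  · -- f = X * h + 1
    set h := f.divX with hh
    have hfe : f = X * h + 1 := by
      have := f.X_mul_divX_add
      rw [hf] at this
      simpa using this.symm
    -- truncated binomial expansion
    have key : ∀ n : ℕ, j ≤ n →
        (f ^ n).coeff j =
          ∑ k ∈ range (j + 1), (n.choose k : ℤ) * ((X * h) ^ k).coeff j := by
      intro n hn
      rw [hfe, add_pow, finset_sum_coeff]
      rw [← Finset.sum_subset (Finset.range_subset_range.mpr (by omega : j + 1 ≤ n + 1))]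
      · refine Finset.sum_congr rfl fun k _ => ?_
        simp [mul_comm]
      · intro k hk hk'
        simp only [Finset.mem_range] at hk hk'
        have hjk : j < k := by omega
        have : ((X * h) ^ k).coeff j = 0 := by
          rw [mul_pow, mul_comm, coeff_mul_X_pow']
          simp [Nat.not_le.mpr hjk]
        simp [this]
    refine ⟨∑ k ∈ range (j + 1),
        Polynomial.C ((((X * h) ^ k).coeff j : ℚ) / k.factorial) * descPochhammer ℚ k,
      j, fun n hn => ?_⟩
    rw [key n hn]
    push_cast
    rw [eval_finset_sum]
    refine Finset.sum_congr rfl fun k _ => ?_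
    rw [eval_mul, eval_C, descPochhammer_eval_eq_descFactorial,
      Nat.descFactorial_eq_factorial_mul_choose]
    push_cast
    field_simp
end

section
/- Let b ≥ 1 be an integer, let a_1,…,a_b be real numbers each at least 1, and let p(s) ∈ ℝ[s] be a non-zero polynomial with deg p(s) < b. Write the formal power series expansion p(s)/Π_{j=1}^b (1 − a_j s) = Σ_{n≥0} r_n s^n in ℝ[[s]] (i.e., Π_{j=1}^b (1 − a_j s)·Σ r_n s^n = p(s), which determines the r_n uniquely since each 1 − a_j s has constant term 1). Then r_n ≠ 0 for all sufficiently large n. -/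
/-!
Multiplying a power series by `1 - a X` replaces its coefficient sequence `r` by the differences
`r (n + 1) - a * r n`. For `a ≥ 1` this operation can be undone without losing the following
dichotomy: the sequence is eventually zero, or it is eventually bounded away from zero with a
fixed sign. If the differences are eventually `≥ 1`, either `r` stays negative, and then
`a * r n < -1`, or `r` becomes nonnegative once and is `≥ 1` from then on; if the differences
vanish, `r` is geometric with ratio `a ≥ 1`. Peeling off the factors of `∏ (1 - a_j X)` one at
a time, starting from the polynomial `p`, gives the dichotomy for `r`. The first alternative
would make `∑ r_n X^n` a polynomial `q` with `∏ (1 - a_j X) * q = p`, of degree at least `b`.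
-/

open Filter PowerSeries

/-- With `c ≠ 0` forced, `1 ≤ c * r n` says that `r n` eventually has the sign of `c` and
`|r n| ≥ 1 / |c|`. -/
def EventuallyZeroOrBoundedAway (r : ℕ → ℝ) : Prop :=
  (∀ᶠ n in atTop, r n = 0) ∨ ∃ c : ℝ, ∀ᶠ n in atTop, 1 ≤ c * r n

theorem EventuallyZeroOrBoundedAway.comp_tendsto {r : ℕ → ℝ} (h : EventuallyZeroOrBoundedAway r)
    {k : ℕ → ℕ} (hk : Tendsto k atTop atTop) : EventuallyZeroOrBoundedAway (r ∘ k) := by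
  rcases h with h | ⟨c, hc⟩
  · exact Or.inl (hk.eventually h)
  · exact Or.inr ⟨c, hk.eventually hc⟩

theorem exists_eventually_one_le_mul_of_one_le_succ_sub_mul {a : ℝ} (ha : 1 ≤ a) {r : ℕ → ℝ}
    (h : ∀ᶠ n in atTop, 1 ≤ r (n + 1) - a * r n) : ∃ c : ℝ, ∀ᶠ n in atTop, 1 ≤ c * r n := by
  obtain ⟨N, hN⟩ := eventually_atTop.1 h
  by_cases hneg : ∀ n ≥ N, r n < 0
  · refine ⟨-a, eventually_atTop.2 ⟨N, fun n hn => ?_⟩⟩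
    linarith [hN n hn, hneg (n + 1) (by omega)]
  · push Not at hneg
    obtain ⟨M, hMN, hM⟩ := hneg
    refine ⟨1, eventually_atTop.2 ⟨M + 1, fun n hn => ?_⟩⟩
    induction n, hn using Nat.le_induction with
    | base => nlinarith [hN M hMN]
    | succ n hn ih => nlinarith [hN n (by omega)]

theorem exists_eventually_one_le_mul_of_exists_one_le_mul_succ_sub_mul {a : ℝ} (ha : 1 ≤ a)
    {r : ℕ → ℝ} (h : ∃ c : ℝ, ∀ᶠ n in atTop, 1 ≤ c * (r (n + 1) - a * r n)) :
    ∃ c : ℝ, ∀ᶠ n in atTop, 1 ≤ c * r n := by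
  obtain ⟨c, hc⟩ := h
  obtain ⟨c', hc'⟩ := exists_eventually_one_le_mul_of_one_le_succ_sub_mul ha
    (r := fun n => c * r n) (hc.mono fun n hn => by linarith)
  exact ⟨c' * c, hc'.mono fun n hn => by linarith⟩

theorem eventuallyZeroOrBoundedAway_of_eventually_succ_sub_mul_eq_zero {a : ℝ} (ha : 1 ≤ a)
    {r : ℕ → ℝ} (h : ∀ᶠ n in atTop, r (n + 1) - a * r n = 0) : EventuallyZeroOrBoundedAway r := by
  obtain ⟨M, hM⟩ := eventually_atTop.1 h
  have hgeom : ∀ n ≥ M, r n = a ^ (n - M) * r M := by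
    intro n hn
    induction n, hn using Nat.le_induction with
    | base => simp
    | succ n hn ih =>
      rw [Nat.sub_add_comm hn, pow_succ, mul_right_comm, ← ih]
      linarith [hM n hn]
  by_cases hrM : r M = 0
  · exact Or.inl (eventually_atTop.2 ⟨M, fun n hn => by simp [hgeom n hn, hrM]⟩)
  · refine Or.inr ⟨(r M)⁻¹, eventually_atTop.2 ⟨M, fun n hn => ?_⟩⟩
    rw [hgeom n hn, mul_comm, mul_assoc, mul_inv_cancel₀ hrM, mul_one]
    exact one_le_pow₀ ha

theorem EventuallyZeroOrBoundedAway.of_succ_sub_mul {a : ℝ} (ha : 1 ≤ a) {r : ℕ → ℝ}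
    (h : EventuallyZeroOrBoundedAway fun n => r (n + 1) - a * r n) :
    EventuallyZeroOrBoundedAway r :=
  h.elim (eventuallyZeroOrBoundedAway_of_eventually_succ_sub_mul_eq_zero ha)
    fun h => Or.inr (exists_eventually_one_le_mul_of_exists_one_le_mul_succ_sub_mul ha h)

theorem PowerSeries.coeff_succ_one_sub_C_mul_X_mul {R : Type*} [CommRing R] (a : R) (f : R⟦X⟧)
    (n : ℕ) : coeff (n + 1) ((1 - C a * X) * f) = coeff (n + 1) f - a * coeff n f := by
  rw [sub_mul, one_mul, mul_assoc, map_sub, coeff_C_mul, coeff_succ_X_mul]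

theorem eventuallyZeroOrBoundedAway_coeff_of_prod_mul {ι : Type*} (s : Finset ι) {a : ι → ℝ}
    (ha : ∀ j ∈ s, 1 ≤ a j) (f : ℝ⟦X⟧)
    (hf : ∀ᶠ n in atTop, coeff n ((∏ j ∈ s, (1 - C (a j) * X)) * f) = 0) :
    EventuallyZeroOrBoundedAway fun n => coeff n f := by
  classical
  induction s using Finset.induction_on generalizing f with
  | empty => exact Or.inl (by simpa using hf)
  | insert i s hi ih =>
    rw [Finset.prod_insert hi, mul_comm (1 - C (a i) * X), mul_assoc] at hf
    have hg := (ih (fun j hj => ha j (Finset.mem_insert_of_mem hj)) _ hf).comp_tendsto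
      (tendsto_add_atTop_nat 1)
    simp only [Function.comp_def, coeff_succ_one_sub_C_mul_X_mul] at hg
    exact hg.of_succ_sub_mul (ha i (Finset.mem_insert_self i s))

theorem Polynomial.natDegree_prod_one_sub_C_mul_X {R ι : Type*} [CommRing R] [IsDomain R]
    (s : Finset ι) {a : ι → R} (ha : ∀ j ∈ s, a j ≠ 0) :
    (∏ j ∈ s, (1 - C (a j) * X)).natDegree = s.card := by
  have hdeg : ∀ j ∈ s, (1 - C (a j) * X).natDegree = 1 := fun j hj => by
    rw [natDegree_sub_eq_right_of_natDegree_lt] <;> simp [natDegree_C_mul_X _ (ha j hj)]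
  rw [natDegree_prod _ _ fun j hj => ne_zero_of_natDegree_gt (n := 0) (by simp [hdeg j hj])]
  simp [Finset.sum_congr rfl hdeg]

theorem PowerSeries.exists_coe_eq_of_eventually_coeff_eq_zero {R : Type*} [CommRing R]
    {f : R⟦X⟧} (hf : ∀ᶠ n in atTop, coeff n f = 0) : ∃ q : Polynomial R, (q : R⟦X⟧) = f := by
  obtain ⟨N, hN⟩ := eventually_atTop.1 hf
  refine ⟨trunc N f, ext fun n => ?_⟩
  rw [Polynomial.coeff_coe, coeff_trunc]
  split_ifs with h
  · rfl
  · exact (hN n (not_lt.1 h)).symm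

theorem Polynomial.card_le_natDegree_of_prod_one_sub_C_mul_X_mul_eq {R ι : Type*} [CommRing R]
    [IsDomain R] (s : Finset ι) {a : ι → R} (ha : ∀ j ∈ s, a j ≠ 0) {p q : Polynomial R} (hp : p ≠ 0)
    (h : (∏ j ∈ s, (1 - C (a j) * X)) * q = p) : s.card ≤ p.natDegree := by
  have hpq : (∏ j ∈ s, (1 - C (a j) * X)) * q ≠ 0 := h ▸ hp
  rw [← h, natDegree_mul (left_ne_zero_of_mul hpq) (right_ne_zero_of_mul hpq),
    natDegree_prod_one_sub_C_mul_X s ha]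
  omega

theorem eventually_nonzero_coeff_of_inv_prod_one_sub_smul_general
    (b : ℕ) (a : Fin b → ℝ) (ha : ∀ j, 1 ≤ a j)
    (p : Polynomial ℝ) (hp : p ≠ 0) (hdeg : p.natDegree < b)
    (r : ℕ → ℝ)
    (hr : (∏ j, (1 - PowerSeries.C (a j) * PowerSeries.X)) * PowerSeries.mk r
        = (Polynomial.coeToPowerSeries.ringHom p)) :
    ∃ N : ℕ, ∀ n : ℕ, N ≤ n → r n ≠ 0 := by
  have hpoly : ∀ᶠ n in atTop, coeff n ((∏ j, (1 - C (a j) * X)) * mk r) = 0 := by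
    rw [hr]
    exact eventually_atTop.2 ⟨p.natDegree + 1, fun n hn => by
      simpa using p.coeff_eq_zero_of_natDegree_lt (by omega)⟩
  rcases eventuallyZeroOrBoundedAway_coeff_of_prod_mul Finset.univ (fun j _ => ha j) (mk r) hpoly
    with hzero | ⟨c, hc⟩
  · obtain ⟨q, hq⟩ := exists_coe_eq_of_eventually_coeff_eq_zero (f := mk r) (by simpa using hzero)
    have hpq : (∏ j, (1 - Polynomial.C (a j) * Polynomial.X)) * q = p := by
      rw [← Polynomial.coe_inj, Polynomial.coe_mul, hq, ← Polynomial.coeToPowerSeries.ringHom_apply,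
        map_prod]
      simpa using hr
    have hbp := Polynomial.card_le_natDegree_of_prod_one_sub_C_mul_X_mul_eq Finset.univ
      (fun j _ => (one_pos.trans_le (ha j)).ne') hp hpq
    rw [Finset.card_univ, Fintype.card_fin] at hbp
    omega
  · obtain ⟨N, hN⟩ := eventually_atTop.1 hc
    exact ⟨N, fun n hn h0 => by have := hN n hn; norm_num [h0] at this⟩

/-- **Eventually nonzero coefficients.**
Let `b ≥ 1`, let `a_1, …, a_b` be real numbers each at least `1`, and let
`p ∈ ℝ[s]` be a nonzero polynomial of degree `< b`.  If
`p(s) / ∏_{j=1}^b (1 - a_j s) = Σ_{n ≥ 0} r_n s^n` as formal power series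
(equivalently `∏_j (1 - a_j s) · Σ r_n s^n = p(s)`, which determines the `r_n`
uniquely since each factor has constant term `1`), then `r_n ≠ 0` for all
sufficiently large `n`. -/
theorem eventually_nonzero_coeff_of_inv_prod_one_sub_smul
    (b : ℕ) (hb : 1 ≤ b) (a : Fin b → ℝ) (ha : ∀ j, 1 ≤ a j)
    (p : Polynomial ℝ) (hp : p ≠ 0) (hdeg : p.natDegree < b)
    (r : ℕ → ℝ)
    (hr : (∏ j, (1 - PowerSeries.C (a j) * PowerSeries.X)) * PowerSeries.mk r
        = (Polynomial.coeToPowerSeries.ringHom p)) :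
    ∃ N : ℕ, ∀ n : ℕ, N ≤ n → r n ≠ 0 :=
  eventually_nonzero_coeff_of_inv_prod_one_sub_smul_general b a ha p hp hdeg r hr
end
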